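/- arXiv:1907.11627 — 4 statements merged into one kernel-verified Lean document; each statement's English description precedes it below -/
import Mathlib

section
/- Let B be a vertex A-algebroid. Then the subspace A∂(A) := span{a·∂(a') : a,a' ∈ A} is an ideal of the vertex A-algebroid B, i.e. it is a left ideal of the Leibniz algebra B and closed under the A-action. -/
/-- A vertex `A`-algebroid over a unital commutative associative `ℂ`-algebra
`(A,*)`: a vector space `B` with a (nonassociative, unital) `A`-action `a·v`,
a Leibniz bracket `[.,.]`, a Leibniz-algebra homomorphism `π : B → Der(A)`,
a symmetric pairing `⟨.,.⟩ : B ⊗ B → A`, and `∂ : A → B` with `π ∘ ∂ = 0`,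
satisfying the standard compatibility axioms. -/
structure VertexAlgebroid (A B : Type*) [CommRing A] [Algebra ℂ A]
    [AddCommGroup B] [Module ℂ B] where
  /-- the `A`-action `a·v` -/
  act : A →ₗ[ℂ] B →ₗ[ℂ] B
  act_one : ∀ v : B, act 1 v = v
  /-- the Leibniz bracket `[u,v]` -/
  br : B →ₗ[ℂ] B →ₗ[ℂ] B
  leibniz : ∀ u v w : B, br u (br v w) = br (br u v) w + br v (br u w)
  /-- the anchor `π`, recorded via `π b a := π(b)(a)` -/
  π : B →ₗ[ℂ] A →ₗ[ℂ] A
  π_deriv : ∀ (b : B) (a a' : A), π b (a * a') = a * π b a' + a' * π b a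
  π_hom : ∀ (u v : B) (a : A), π (br u v) a = π u (π v a) - π v (π u a)
  /-- the symmetric pairing `⟨u,v⟩` -/
  pair : B →ₗ[ℂ] B →ₗ[ℂ] A
  pair_symm : ∀ u v : B, pair u v = pair v u
  d : A →ₗ[ℂ] B
  π_d : ∀ a a' : A, π (d a) a' = 0
  ax1 : ∀ (a a' : A) (v : B),
    act a (act a' v) - act (a * a') v = act (π v a) (d a') + act (π v a') (d a)
  ax2 : ∀ (u : B) (a : A) (v : B), br u (act a v) = act (π u a) v + act a (br u v)
  ax3 : ∀ u v : B, br u v + br v u = d (pair u v)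
  ax4 : ∀ (a : A) (v : B) (a' : A), π (act a v) a' = a * π v a'
  ax5 : ∀ (a : A) (u v : B), pair (act a u) v = a * pair u v - π u (π v a)
  ax6 : ∀ v v1 v2 : B, π v (pair v1 v2) = pair (br v v1) v2 + pair v1 (br v v2)
  ax7 : ∀ a a' : A, d (a * a') = act a (d a') + act a' (d a)
  ax8 : ∀ (v : B) (a : A), br v (d a) = d (π v a)
  ax9 : ∀ (v : B) (a : A), pair v (d a) = π v a

/-- For a vertex `A`-algebroid `B`, the subspace `A∂(A) = span{a·∂a'}` is an
ideal of the vertex `A`-algebroid `B`: a left ideal of the Leibniz algebra `B`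
which is closed under the `A`-action. -/
theorem stmt_9 {A B : Type*} [CommRing A] [Algebra ℂ A]
    [AddCommGroup B] [Module ℂ B] (V : VertexAlgebroid A B) :
    (∀ (b : B) (x : B),
      x ∈ Submodule.span ℂ {x : B | ∃ a a', x = V.act a (V.d a')} →
      V.br b x ∈ Submodule.span ℂ {x : B | ∃ a a', x = V.act a (V.d a')}) ∧
    (∀ (a : A) (x : B),
      x ∈ Submodule.span ℂ {x : B | ∃ a a', x = V.act a (V.d a')} →
      V.act a x ∈ Submodule.span ℂ {x : B | ∃ a a', x = V.act a (V.d a')}) := by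
  constructor
  · intro b x hx
    induction hx using Submodule.span_induction with
    | mem y hy =>
      obtain ⟨a, a', rfl⟩ := hy
      rw [V.ax2, V.ax8]
      exact add_mem (Submodule.subset_span ⟨_, _, rfl⟩)
        (Submodule.subset_span ⟨_, _, rfl⟩)
    | zero => simpa using Submodule.zero_mem _
    | add y z _ _ hy hz => simpa using add_mem hy hz
    | smul c y _ hy => simpa using Submodule.smul_mem _ c hy
  · intro a x hx
    induction hx using Submodule.span_induction with
    | mem y hy =>
      obtain ⟨a', a'', rfl⟩ := hy
      have h := V.ax1 a a' (V.d a'')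
      simp only [V.π_d, map_zero, LinearMap.zero_apply, add_zero,
        sub_eq_zero] at h
      rw [h]
      exact Submodule.subset_span ⟨_, _, rfl⟩
    | zero => simpa using Submodule.zero_mem _
    | add y z _ _ hy hz => simpa using add_mem hy hz
    | smul c y _ hy => simpa using Submodule.smul_mem _ c hy
end

section
/- Let B be a vertex A-algebroid. Then rad⟨.,.⟩ is an A-submodule of B: for a ∈ A, u ∈ rad⟨.,.⟩, a·u ∈ rad⟨.,.⟩. Consequently rad⟨.,.⟩ is an ideal of the vertex A-algebroid B. -/
/-- For a vertex `A`-algebroid `B`, `rad⟨.,.⟩` is an `A`-submodule of `B`;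
consequently (being also a left Leibniz ideal) it is an ideal of the vertex
`A`-algebroid `B`. -/
theorem stmt_13 {A B : Type*} [CommRing A] [Algebra ℂ A]
    [AddCommGroup B] [Module ℂ B] (V : VertexAlgebroid A B) :
    (∀ (a : A) (u : B), (∀ b : B, V.pair u b = 0) →
      ∀ b : B, V.pair (V.act a u) b = 0) ∧
    (∀ (w u : B), (∀ b : B, V.pair u b = 0) →
      ∀ b : B, V.pair (V.br w u) b = 0) := by
  constructor
  · intro a u hu b
    have hπ : ∀ a' : A, V.π u a' = 0 := fun a' => by
      rw [← V.ax9 u a', hu]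
    rw [V.ax5, hu, hπ, mul_zero, sub_zero]
  · intro w u hu b
    have h := V.ax6 w u b
    rw [hu, hu, map_zero] at h
    simpa using h.symm
end

section
/- Let V = ⊕_{n≥0} V_(n) be an ℕ-graded vertex algebra with 2 ≤ dim V_(0) < ∞, such that V_(0) (with product a*b = a_{-1}b) is a local commutative associative algebra. Then V is indecomposable: V cannot be written as a direct sum of two nonzero ideals. -/
/-!
Write `1 = e + f` with `e ∈ U`, `f ∈ W`; then `e₋₁` is the identity on `U`. Since the grading is
by `ℕ`, the degree-0 component of `x₋₁y` only involves those of `x` and `y`, so `b ↦ a₋₁b` is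
idempotent on `V₍₀₎`, where `a` is the degree-0 component of `e`; locality then forces `a = 1` or
`a = 0`, with no need for associativity of `V₍₀₎`. Finally, an element `e = e₋₁e` with vanishing
degree-0 component vanishes in every degree, by induction on the degree; so `f = 0` or `e = 0`,
that is `W = 0` or `U = 0`.
-/

open scoped BigOperators

/-- An ℕ-graded vertex algebra over `ℂ`: a vector space `V` with modes
`u_n v = mode n u v`, vacuum `one` with `Y(1,x) = id` and the creation
property, truncation, the Borcherds identity (equivalent to the Jacobi
identity), and a grading `grade : ℤ → Submodule ℂ V` supported in degrees
`≥ 0` with `1 ∈ V₍₀₎` and `u_m V₍ₙ₎ ⊆ V₍ₖ₊ₙ₋ₘ₋₁₎` for `u ∈ V₍ₖ₎`. -/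
structure NGradedVertexAlgebra (V : Type*) [AddCommGroup V] [Module ℂ V] where
  /-- the modes: `mode n u v = uₙv` -/
  mode : ℤ → V →ₗ[ℂ] V →ₗ[ℂ] V
  one : V
  /-- truncation: `uₙv = 0` for `n` sufficiently large -/
  trunc : ∀ u v : V, ∃ N : ℤ, ∀ n ≥ N, mode n u v = 0
  /-- `Y(1,x) = id` -/
  vacuum : ∀ (n : ℤ) (v : V), mode n one v = if n = -1 then v else 0
  /-- creation: `v₋₁1 = v` -/
  create_neg_one : ∀ v : V, mode (-1) v one = v
  /-- creation: `vₙ1 = 0` for `n ≥ 0` -/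
  create_nonneg : ∀ (v : V) (n : ℤ), 0 ≤ n → mode n v one = 0
  /-- the Borcherds identity, for all `u v w ∈ V` and `l m n ∈ ℤ`:
  `∑ᵢ C(m,i) (u_{l+i}v)_{m+n−i} w
    = ∑ᵢ (−1)ⁱ C(l,i) (u_{l+m−i}(v_{n+i}w) − (−1)ˡ v_{l+n−i}(u_{m+i}w))` -/
  borcherds : ∀ (u v w : V) (l m n : ℤ),
    ∑ᶠ i : ℕ, ((Ring.choose m i : ℤ) : ℂ) •
        mode (m + n - i) (mode (l + i) u v) w
      = ∑ᶠ i : ℕ, ((-1 : ℂ) ^ i * ((Ring.choose l i : ℤ) : ℂ)) •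
          (mode (l + m - i) u (mode (n + i) v w)
            - ((-1 : ℂ) ^ l) • mode (l + n - i) v (mode (m + i) u w))
  /-- the grading -/
  grade : ℤ → Submodule ℂ V
  internal : DirectSum.IsInternal grade
  grade_neg : ∀ n < 0, grade n = ⊥
  one_mem : one ∈ grade 0
  grading : ∀ (k n m : ℤ) (u v : V), u ∈ grade k → v ∈ grade n →
    mode m u v ∈ grade (k + n - m - 1)

/-- An ideal of a vertex algebra: a subspace `I` with `vₙw ∈ I` and `wₙv ∈ I`
for all `v ∈ V`, `w ∈ I`, `n ∈ ℤ`. -/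
def NGradedVertexAlgebra.IsIdeal {V : Type*} [AddCommGroup V] [Module ℂ V]
    (𝒱 : NGradedVertexAlgebra V) (I : Submodule ℂ V) : Prop :=
  ∀ (n : ℤ) (v w : V), w ∈ I → 𝒱.mode n v w ∈ I ∧ 𝒱.mode n w v ∈ I

namespace NGradedVertexAlgebra

variable {V : Type*} [AddCommGroup V] [Module ℂ V] (𝒱 : NGradedVertexAlgebra V)

noncomputable instance : DirectSum.Decomposition 𝒱.grade := 𝒱.internal.chooseDecomposition

noncomputable def proj (n : ℤ) : V →ₗ[ℂ] V :=
  (𝒱.grade n).subtype ∘ₗ DirectSum.component ℂ ℤ (fun i => 𝒱.grade i) n ∘ₗ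
    (DirectSum.decomposeLinearEquiv 𝒱.grade).toLinearMap

lemma proj_mem (n : ℤ) (x : V) : 𝒱.proj n x ∈ 𝒱.grade n := Submodule.coe_mem _

lemma proj_of_mem {p : ℤ} {x : V} (hx : x ∈ 𝒱.grade p) (n : ℤ) :
    𝒱.proj n x = if p = n then x else 0 := by
  split_ifs with h
  · subst h; exact DirectSum.decompose_of_mem_same _ hx
  · exact DirectSum.decompose_of_mem_ne _ hx h

lemma proj_self_of_mem {n : ℤ} {x : V} (hx : x ∈ 𝒱.grade n) : 𝒱.proj n x = x := by
  simp [𝒱.proj_of_mem hx]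

lemma eq_zero_of_mem_grade_of_neg {n : ℤ} (hn : n < 0) {x : V} (hx : x ∈ 𝒱.grade n) : x = 0 := by
  rwa [𝒱.grade_neg n hn, Submodule.mem_bot] at hx

lemma proj_of_neg {n : ℤ} (hn : n < 0) (x : V) : 𝒱.proj n x = 0 :=
  𝒱.eq_zero_of_mem_grade_of_neg hn (𝒱.proj_mem n x)

lemma eq_zero_of_forall_proj_eq_zero {x : V} (h : ∀ n : ℕ, 𝒱.proj n x = 0) : x = 0 := by
  refine (DirectSum.decompose 𝒱.grade).injective (DFinsupp.ext fun n => Subtype.ext ?_)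
  rw [DirectSum.decompose_zero]
  change 𝒱.proj n x = 0
  obtain hn | hn := lt_or_ge n 0
  · exact 𝒱.proj_of_neg hn x
  · lift n to ℕ using hn
    exact h n

lemma mode_neg_one_mem {p q : ℤ} {x y : V} (hx : x ∈ 𝒱.grade p) (hy : y ∈ 𝒱.grade q) :
    𝒱.mode (-1) x y ∈ 𝒱.grade (p + q) := by
  simpa using 𝒱.grading p q (-1) x y hx hy

lemma mode_one_neg_one (v : V) : 𝒱.mode (-1) 𝒱.one v = v := by
  simp [𝒱.vacuum]

lemma proj_mode_neg_one (k : ℤ) (x y : V) :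
    𝒱.proj k (𝒱.mode (-1) x y)
      = ∑ i ∈ Finset.Icc (0 : ℤ) k, 𝒱.mode (-1) (𝒱.proj i x) (𝒱.proj (k - i) y) := by
  induction x using DirectSum.Decomposition.inductionOn 𝒱.grade generalizing y with
  | zero => simp
  | add x₁ x₂ h₁ h₂ => simp only [map_add, LinearMap.add_apply, h₁, h₂, Finset.sum_add_distrib]
  | @homogeneous p x =>
  induction y using DirectSum.Decomposition.inductionOn 𝒱.grade with
  | zero => simp
  | add y₁ y₂ h₁ h₂ => simp only [map_add, h₁, h₂, Finset.sum_add_distrib]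
  | @homogeneous q y =>
  obtain ⟨x, hx⟩ := x
  obtain ⟨y, hy⟩ := y
  obtain hp | hp := lt_or_ge p 0
  · simp [𝒱.eq_zero_of_mem_grade_of_neg hp hx]
  obtain hq | hq := lt_or_ge q 0
  · simp [𝒱.eq_zero_of_mem_grade_of_neg hq hy]
  simp only [𝒱.proj_of_mem (𝒱.mode_neg_one_mem hx hy), 𝒱.proj_of_mem hx, 𝒱.proj_of_mem hy]
  rw [Finset.sum_eq_single p]
  · by_cases hk : p + q = k
    · rw [if_pos hk, if_pos rfl, if_pos (by omega)]
    · rw [if_neg hk, if_pos rfl, if_neg (by omega), map_zero]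
  · intro i _ hi
    simp [Ne.symm hi]
  · intro hp'
    rw [Finset.mem_Icc] at hp'
    simp [show q ≠ k - p by omega]

lemma proj_zero_mode_neg_one (x y : V) :
    𝒱.proj 0 (𝒱.mode (-1) x y) = 𝒱.mode (-1) (𝒱.proj 0 x) (𝒱.proj 0 y) := by
  simp [proj_mode_neg_one]

lemma eq_zero_of_mode_neg_one_self {e : V} (he : 𝒱.mode (-1) e e = e) (h0 : 𝒱.proj 0 e = 0) :
    e = 0 := by
  refine 𝒱.eq_zero_of_forall_proj_eq_zero fun n => ?_
  induction n using Nat.strong_induction_on with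
  | _ n ih =>
  rw [← he, proj_mode_neg_one]
  refine Finset.sum_eq_zero fun i hi => ?_
  rw [Finset.mem_Icc] at hi
  obtain h | h := eq_or_lt_of_le hi.2
  · rw [h, sub_self, h0, map_zero]
  · lift i to ℕ using hi.1
    rw [ih i (by exact_mod_cast h), map_zero, LinearMap.zero_apply]

lemma eq_one_or_eq_zero_of_forall_mode_neg_one_idem {a : V}
    (hlocal : (∃ b ∈ 𝒱.grade 0, 𝒱.mode (-1) a b = 𝒱.one) ∨
      (∃ b ∈ 𝒱.grade 0, 𝒱.mode (-1) (𝒱.one - a) b = 𝒱.one))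
    (hidem : ∀ b ∈ 𝒱.grade 0, 𝒱.mode (-1) a (𝒱.mode (-1) a b) = 𝒱.mode (-1) a b) :
    a = 𝒱.one ∨ a = 0 := by
  rcases hlocal with ⟨b, hb, hab⟩ | ⟨b, hb, hab⟩
  · left
    simpa [hab, 𝒱.create_neg_one] using hidem b hb
  · right
    rw [map_sub, LinearMap.sub_apply, 𝒱.mode_one_neg_one] at hab
    rw [← 𝒱.create_neg_one a, ← hab, map_sub, hidem b hb, sub_self]

lemma proj_zero_mode_neg_one_idem {e : V}
    (hidem : ∀ v, 𝒱.mode (-1) e (𝒱.mode (-1) e v) = 𝒱.mode (-1) e v) {b : V}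
    (hb : b ∈ 𝒱.grade 0) :
    𝒱.mode (-1) (𝒱.proj 0 e) (𝒱.mode (-1) (𝒱.proj 0 e) b) = 𝒱.mode (-1) (𝒱.proj 0 e) b := by
  have hproj : 𝒱.mode (-1) (𝒱.proj 0 e) b = 𝒱.proj 0 (𝒱.mode (-1) e b) := by
    rw [proj_zero_mode_neg_one, 𝒱.proj_self_of_mem hb]
  rw [hproj, ← proj_zero_mode_neg_one, hidem]

lemma eq_bot_of_proj_zero_eq_zero {U : Submodule ℂ V} {e : V}
    (hunit : ∀ u ∈ U, 𝒱.mode (-1) e u = u) (he : e ∈ U) (h0 : 𝒱.proj 0 e = 0) : U = ⊥ := by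
  have he0 : e = 0 := 𝒱.eq_zero_of_mode_neg_one_self (hunit e he) h0
  refine (Submodule.eq_bot_iff U).2 fun u hu => ?_
  rw [← hunit u hu, he0, map_zero, LinearMap.zero_apply]

section

variable {𝒱} {U W : Submodule ℂ V} {e f : V}

lemma IsIdeal.mode_neg_one_eq_self_of_add_eq_one (hU : 𝒱.IsIdeal U) (hW : 𝒱.IsIdeal W)
    (hUW : U ⊓ W = ⊥) (hf : f ∈ W) (hef : e + f = 𝒱.one) :
    ∀ u ∈ U, 𝒱.mode (-1) e u = u := by
  intro u hu
  have hfu : 𝒱.mode (-1) f u = 0 := by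
    rw [← Submodule.mem_bot ℂ, ← hUW]
    exact ⟨(hU (-1) f u hu).1, (hW (-1) u f hf).2⟩
  simpa [← hef, hfu] using 𝒱.mode_one_neg_one u

end

end NGradedVertexAlgebra

theorem stmt_18_general {V : Type*} [AddCommGroup V] [Module ℂ V]
    (𝒱 : NGradedVertexAlgebra V)
    (hlocal : ∀ a ∈ 𝒱.grade 0,
      (∃ b ∈ 𝒱.grade 0, 𝒱.mode (-1) a b = 𝒱.one) ∨
      (∃ b ∈ 𝒱.grade 0, 𝒱.mode (-1) (𝒱.one - a) b = 𝒱.one)) :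
    ¬ ∃ U W : Submodule ℂ V, 𝒱.IsIdeal U ∧ 𝒱.IsIdeal W ∧
        U ≠ ⊥ ∧ W ≠ ⊥ ∧ U ⊓ W = ⊥ ∧ U ⊔ W = ⊤ := by
  rintro ⟨U, W, hU, hW, hUne, hWne, hinf, hsup⟩
  obtain ⟨e, he, f, hf, hef⟩ := Submodule.mem_sup.1 (hsup ▸ Submodule.mem_top : 𝒱.one ∈ U ⊔ W)
  have hUe := hU.mode_neg_one_eq_self_of_add_eq_one hW hinf hf hef
  have hWf := hW.mode_neg_one_eq_self_of_add_eq_one hU (inf_comm U W ▸ hinf) he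
    ((add_comm f e).trans hef)
  have hidem : ∀ v, 𝒱.mode (-1) e (𝒱.mode (-1) e v) = 𝒱.mode (-1) e v :=
    fun v => hUe _ (hU (-1) v e he).2
  rcases 𝒱.eq_one_or_eq_zero_of_forall_mode_neg_one_idem (hlocal _ (𝒱.proj_mem 0 e))
    (fun _ => 𝒱.proj_zero_mode_neg_one_idem hidem) with h1 | h0
  · refine hWne (𝒱.eq_bot_of_proj_zero_eq_zero hWf hf ?_)
    rw [← sub_eq_of_eq_add' hef.symm, map_sub, h1, 𝒱.proj_self_of_mem 𝒱.one_mem, sub_self]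
  · exact hUne (𝒱.eq_bot_of_proj_zero_eq_zero hUe he h0)

/-- Let `V = ⊕ₙ V₍ₙ₎` be an ℕ-graded vertex algebra with
`2 ≤ dim V₍₀₎ < ∞`, such that `V₍₀₎` (with product `a*b = a₋₁b`) is a local
commutative associative algebra — equivalently (finite dimension), for every
`a ∈ V₍₀₎` either `a` or `1 − a` is a unit of `V₍₀₎`.  Then `V` is
indecomposable: it is not a direct sum of two nonzero ideals. -/
theorem stmt_18 {V : Type*} [AddCommGroup V] [Module ℂ V]
    (𝒱 : NGradedVertexAlgebra V)
    [FiniteDimensional ℂ (𝒱.grade 0)]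
    (hdim : 2 ≤ Module.finrank ℂ (𝒱.grade 0))
    (hlocal : ∀ a ∈ 𝒱.grade 0,
      (∃ b ∈ 𝒱.grade 0, 𝒱.mode (-1) a b = 𝒱.one) ∨
      (∃ b ∈ 𝒱.grade 0, 𝒱.mode (-1) (𝒱.one - a) b = 𝒱.one)) :
    ¬ ∃ U W : Submodule ℂ V, 𝒱.IsIdeal U ∧ 𝒱.IsIdeal W ∧
        U ≠ ⊥ ∧ W ≠ ⊥ ∧ U ⊓ W = ⊥ ∧ U ⊔ W = ⊤ :=
  stmt_18_general 𝒱 hlocal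
end

section
/- Let V = ⊕_{n≥0} V_(n) be an ℕ-graded vertex algebra generated by V_(0) and V_(1), with V_(0), V_(1) finite-dimensional and dim V_(0) ≥ 2. Let rad⟨.,.⟩ = {u ∈ V_(1) : u_1 b = 0 for all b ∈ V_(1)}. Then the ideal of V generated by rad⟨.,.⟩ intersects V_(0) in {0}. Consequently, if this ideal is nonzero, V is not a simple vertex algebra. -/
open scoped BigOperators

namespace Stmt19Aux

/-! ### Binomial coefficient values -/

theorem choose_zero_of_ne (i : ℕ) (hi : i ≠ 0) : Ring.choose (0 : ℤ) i = 0 := by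
  obtain ⟨j, rfl⟩ := Nat.exists_eq_succ_of_ne_zero hi
  exact Ring.choose_zero_succ ℤ j

theorem choose_neg_one (i : ℕ) : Ring.choose (-1 : ℤ) i = (-1) ^ i := by
  induction i with
  | zero => simp [Ring.choose_zero_right]
  | succ k ih =>
    have h := Ring.choose_succ_succ (-1 : ℤ) k
    rw [neg_add_cancel] at h
    rw [Ring.choose_zero_succ] at h
    have : Ring.choose (-1 : ℤ) (k+1) = - Ring.choose (-1 : ℤ) k := by linarith
    rw [this, ih]; ring

theorem choose_neg_two (i : ℕ) : Ring.choose (-2 : ℤ) i = (-1) ^ i * (i + 1) := by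
  induction i with
  | zero => simp [Ring.choose_zero_right]
  | succ k ih =>
    have h := Ring.choose_succ_succ (-2 : ℤ) k
    have h2 : (-2 : ℤ) + 1 = -1 := by ring
    rw [h2, choose_neg_one] at h
    have : Ring.choose (-2 : ℤ) (k+1) = (-1)^(k+1) - Ring.choose (-2 : ℤ) k := by linarith
    rw [this, ih]; push_cast; ring

theorem choose_one_of_ge_two (i : ℕ) (hi : 2 ≤ i) : Ring.choose (1 : ℤ) i = 0 := by
  have : ((1 : ℕ) : ℤ) = (1 : ℤ) := by norm_num
  rw [← this, Ring.choose_natCast]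
  rw [Nat.choose_eq_zero_of_lt (by omega)]
  norm_num

/-! ### finsum helpers -/

theorem finsum_mem_submodule {V : Type*} [AddCommGroup V] [Module ℂ V]
    {f : ℕ → V} {p : Submodule ℂ V} (h : ∀ i, f i ∈ p) : (∑ᶠ i, f i) ∈ p := by
  by_cases hfin : (Function.support f).Finite
  · rw [finsum_eq_sum f hfin]
    exact Submodule.sum_mem _ fun i _ => h i
  · rw [finsum_of_infinite_support hfin]
    exact p.zero_mem

theorem finsum_pair {M : Type*} [AddCommMonoid M] {f : ℕ → M}
    (h : ∀ i, 2 ≤ i → f i = 0) : ∑ᶠ i, f i = f 0 + f 1 := by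
  have hsupp : Function.support f ⊆ ({0, 1} : Finset ℕ) := by
    intro i hi
    simp only [Function.mem_support] at hi
    by_contra hmem
    simp only [Finset.coe_insert, Finset.coe_singleton, Set.mem_insert_iff,
      Set.mem_singleton_iff] at hmem
    exact hi (h i (by omega))
  rw [finsum_eq_finset_sum_of_support_subset f hsupp]
  simp [Finset.sum_pair]

end Stmt19Aux

namespace Stmt19Aux

variable {V : Type*} [AddCommGroup V] [Module ℂ V] (𝒱 : NGradedVertexAlgebra V)

/-! ### basic vanishing lemmas -/

theorem mem_grade_neg {q : ℤ} (hq : q < 0) {x : V} (hx : x ∈ 𝒱.grade q) : x = 0 := by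
  rw [𝒱.grade_neg q hq] at hx
  simpa using hx

theorem mode_zero_left (n : ℤ) (w : V) : 𝒱.mode n 0 w = 0 := by
  rw [map_zero]; rfl

theorem mode_zero_right (n : ℤ) (v : V) : 𝒱.mode n v 0 = 0 := map_zero _

/-- degree vanishing: if `u ∈ Vₖ`, `v ∈ Vₚ` and `k + p - m - 1 < 0` then `uₘv = 0`. -/
theorem mode_eq_zero_of_deg {k p m : ℤ} {u v : V} (hu : u ∈ 𝒱.grade k)
    (hv : v ∈ 𝒱.grade p) (h : k + p - m - 1 < 0) : 𝒱.mode m u v = 0 :=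
  mem_grade_neg 𝒱 h (𝒱.grading k p m u v hu hv)

/-- `D`-operator. -/
def DD (x : V) : V := 𝒱.mode (-2) x 𝒱.one

theorem DD_zero : DD 𝒱 (0 : V) = 0 := by
  unfold DD; rw [mode_zero_left]

theorem DD_mem {p : ℤ} {x : V} (hx : x ∈ 𝒱.grade p) : DD 𝒱 x ∈ 𝒱.grade (p + 1) := by
  have := 𝒱.grading p 0 (-2) x 𝒱.one hx 𝒱.one_mem
  have h : p + 0 - (-2) - 1 = p + 1 := by ring
  rwa [h] at this

/-! ### Commutator formula (Borcherds with `l = 0`):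
`u_q (c_m w) = c_m (u_q w) + ∑ᶠ i, C(q,i) • (u_i c)_{q+m-i} w` -/

theorem comm_formula (u c w : V) (q m : ℤ) :
    𝒱.mode q u (𝒱.mode m c w) = 𝒱.mode m c (𝒱.mode q u w)
      + ∑ᶠ i : ℕ, ((Ring.choose q i : ℤ) : ℂ) • 𝒱.mode (q + m - i) (𝒱.mode i u c) w := by
  have hb := 𝒱.borcherds u c w 0 q m
  have hL : (∑ᶠ i : ℕ, ((Ring.choose q i : ℤ) : ℂ) •
        𝒱.mode (q + m - i) (𝒱.mode (0 + i) u c) w)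
      = ∑ᶠ i : ℕ, ((Ring.choose q i : ℤ) : ℂ) •
        𝒱.mode (q + m - i) (𝒱.mode i u c) w := by
    apply finsum_congr
    intro i
    norm_num
  have hR : (∑ᶠ i : ℕ, ((-1 : ℂ) ^ i * ((Ring.choose (0:ℤ) i : ℤ) : ℂ)) •
          (𝒱.mode (0 + q - i) u (𝒱.mode (m + i) c w)
            - ((-1 : ℂ) ^ (0:ℤ)) • 𝒱.mode (0 + m - i) c (𝒱.mode (q + i) u w)))
      = 𝒱.mode q u (𝒱.mode m c w) - 𝒱.mode m c (𝒱.mode q u w) := by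
    rw [finsum_eq_single _ 0]
    · norm_num
    · intro i hi
      rw [choose_zero_of_ne i hi]
      norm_num
  rw [hL, hR] at hb
  rw [hb]
  abel

/-! ### Iterate formula (Borcherds with `m = 0`). -/

theorem iterate_formula (c z x : V) (l n : ℤ) :
    𝒱.mode n (𝒱.mode l c z) x
      = ∑ᶠ i : ℕ, ((-1 : ℂ) ^ i * ((Ring.choose l i : ℤ) : ℂ)) •
          (𝒱.mode (l - i) c (𝒱.mode (n + i) z x)
            - ((-1 : ℂ) ^ l) • 𝒱.mode (l + n - i) z (𝒱.mode i c x)) := by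
  have hb := 𝒱.borcherds c z x l 0 n
  have hL : (∑ᶠ i : ℕ, ((Ring.choose (0:ℤ) i : ℤ) : ℂ) •
        𝒱.mode (0 + n - i) (𝒱.mode (l + i) c z) x)
      = 𝒱.mode n (𝒱.mode l c z) x := by
    rw [finsum_eq_single _ 0]
    · norm_num
    · intro i hi
      rw [choose_zero_of_ne i hi]
      norm_num
  have hR : (∑ᶠ i : ℕ, ((-1 : ℂ) ^ i * ((Ring.choose l i : ℤ) : ℂ)) •
          (𝒱.mode (l + 0 - i) c (𝒱.mode (n + i) z x)
            - ((-1 : ℂ) ^ l) • 𝒱.mode (l + n - i) z (𝒱.mode (0 + i) c x)))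
      = ∑ᶠ i : ℕ, ((-1 : ℂ) ^ i * ((Ring.choose l i : ℤ) : ℂ)) •
          (𝒱.mode (l - i) c (𝒱.mode (n + i) z x)
            - ((-1 : ℂ) ^ l) • 𝒱.mode (l + n - i) z (𝒱.mode i c x)) := by
    apply finsum_congr
    intro i
    norm_num
  rw [hL, hR] at hb
  exact hb

end Stmt19Aux

namespace Stmt19Aux

variable {V : Type*} [AddCommGroup V] [Module ℂ V] (𝒱 : NGradedVertexAlgebra V)

/-- `D(uₘv) = uₘ(Dv) - m • u_{m-1} v`. -/
theorem DD_mode (u v : V) (m : ℤ) :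
    DD 𝒱 (𝒱.mode m u v) = 𝒱.mode m u (DD 𝒱 v) - (m : ℂ) • 𝒱.mode (m - 1) u v := by
  have hb := 𝒱.borcherds u v 𝒱.one m 0 (-2)
  have hL : (∑ᶠ i : ℕ, ((Ring.choose (0:ℤ) i : ℤ) : ℂ) •
        𝒱.mode (0 + (-2) - i) (𝒱.mode (m + i) u v) 𝒱.one)
      = DD 𝒱 (𝒱.mode m u v) := by
    rw [finsum_eq_single _ 0]
    · unfold DD; norm_num
    · intro i hi
      rw [choose_zero_of_ne i hi]
      norm_num
  have hR : (∑ᶠ i : ℕ, ((-1 : ℂ) ^ i * ((Ring.choose m i : ℤ) : ℂ)) •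
          (𝒱.mode (m + 0 - i) u (𝒱.mode (-2 + i) v 𝒱.one)
            - ((-1 : ℂ) ^ m) • 𝒱.mode (m + (-2) - i) v (𝒱.mode (0 + i) u 𝒱.one)))
      = 𝒱.mode m u (DD 𝒱 v) - (m : ℂ) • 𝒱.mode (m - 1) u v := by
    rw [finsum_pair]
    · have h0 : ((0:ℤ) + (0:ℕ)) = (0:ℤ) := by norm_num
      have e1 : 𝒱.mode ((0:ℤ) + ((0:ℕ):ℤ)) u 𝒱.one = 0 := by
        rw [𝒱.create_nonneg]; norm_num
      have e2 : 𝒱.mode ((0:ℤ) + ((1:ℕ):ℤ)) u 𝒱.one = 0 := by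
        rw [𝒱.create_nonneg]; norm_num
      have e3 : 𝒱.mode ((-2:ℤ) + ((0:ℕ):ℤ)) v 𝒱.one = DD 𝒱 v := by
        unfold DD; norm_num
      have e4 : 𝒱.mode ((-2:ℤ) + ((1:ℕ):ℤ)) v 𝒱.one = v := by
        have : ((-2:ℤ) + ((1:ℕ):ℤ)) = -1 := by norm_num
        rw [this, 𝒱.create_neg_one]
      rw [e1, e2, e3, e4]
      rw [Ring.choose_zero_right, Ring.choose_one_right]
      simp only [mode_zero_right, smul_zero, sub_zero, pow_zero, pow_one, Int.cast_one]
      have h5 : (m : ℤ) + 0 - ((0:ℕ):ℤ) = m := by norm_num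
      have h6 : (m : ℤ) + 0 - ((1:ℕ):ℤ) = m - 1 := by norm_num
      rw [h5, h6]
      simp only [one_mul]
      push_cast
      module
    · intro i hi
      have : 𝒱.mode (-2 + (i:ℤ)) v 𝒱.one = 0 := by
        apply 𝒱.create_nonneg
        omega
      rw [this]
      have : 𝒱.mode (0 + (i:ℤ)) u 𝒱.one = 0 := by
        apply 𝒱.create_nonneg
        omega
      rw [this]
      simp
  rw [hL, hR] at hb
  exact hb

/-- `(Dv)ₙ w = -n • v_{n-1} w`. -/
theorem mode_DD (v w : V) (n : ℤ) :
    𝒱.mode n (DD 𝒱 v) w = -(n : ℂ) • 𝒱.mode (n - 1) v w := by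
  have hb := 𝒱.borcherds v 𝒱.one w (-2) 0 n
  have hL : (∑ᶠ i : ℕ, ((Ring.choose (0:ℤ) i : ℤ) : ℂ) •
        𝒱.mode (0 + n - i) (𝒱.mode (-2 + i) v 𝒱.one) w)
      = 𝒱.mode n (DD 𝒱 v) w := by
    rw [finsum_eq_single _ 0]
    · unfold DD; norm_num
    · intro i hi
      rw [choose_zero_of_ne i hi]
      norm_num
  rw [hL] at hb
  rw [hb]
  -- now evaluate the RHS finsum, by cases on the sign of n
  have hneg2 : ((-1:ℂ) ^ (-2 : ℤ)) = 1 := by norm_num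
  rcases lt_trichotomy n 0 with hn | hn | hn
  · -- n < 0 : only the term i = -1-n survives (giving the first part)
    set a : ℕ := (-1 - n).toNat with ha
    have haz : (a : ℤ) = -1 - n := by
      rw [ha]; exact Int.toNat_of_nonneg (by omega)
    rw [finsum_eq_single _ a]
    · have hv1 : 𝒱.mode (n + a) 𝒱.one w = w := by
        rw [𝒱.vacuum]
        have : n + (a:ℤ) = -1 := by omega
        simp [this]
      have hv2 : 𝒱.mode (-2 + n - a) 𝒱.one (𝒱.mode (0 + a) v w) = 0 := by
        rw [𝒱.vacuum]
        have : ¬ (-2 + n - (a:ℤ) = -1) := by omega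
        simp [this]
      rw [hv1, hv2, hneg2]
      rw [choose_neg_two]
      have hidx : (-2 : ℤ) + 0 - (a:ℤ) = n - 1 := by omega
      rw [hidx]
      have hco : ((-1:ℂ)^a * ((((-1:ℤ))^a * ((a:ℤ) + 1) : ℤ) : ℂ)) = -(n:ℂ) := by
        push_cast
        rw [← mul_assoc, ← mul_pow]
        simp only [neg_mul_neg, one_mul, one_pow]
        have : ((a:ℂ) + 1) = -(n:ℂ) := by
          have : ((a:ℤ) + 1) = -n := by omega
          calc ((a:ℂ) + 1) = (((a:ℤ) + 1 : ℤ) : ℂ) := by push_cast; ring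
          _ = ((-n : ℤ) : ℂ) := by rw [this]
          _ = -(n:ℂ) := by push_cast; ring
        simpa using this
      rw [hco]
      simp
    · intro i hi
      have hv1 : 𝒱.mode (n + i) 𝒱.one w = 0 := by
        rw [𝒱.vacuum]
        have : ¬ ((n:ℤ) + i = -1) := by omega
        simp [this]
      have hv2 : 𝒱.mode (-2 + n - i) 𝒱.one (𝒱.mode (0 + i) v w) = 0 := by
        rw [𝒱.vacuum]
        have : ¬ (-2 + n - (i:ℤ) = -1) := by omega
        simp [this]
      rw [hv1, hv2]
      simp
  · -- n = 0
    subst hn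
    rw [finsum_eq_zero_of_forall_eq_zero]
    · simp
    · intro i
      have hv1 : 𝒱.mode (0 + i) 𝒱.one w = 0 := by
        rw [𝒱.vacuum]
        have : ¬ ((0:ℤ) + i = -1) := by omega
        simp [this]
      have hv2 : 𝒱.mode (-2 + 0 - i) 𝒱.one (𝒱.mode (0 + i) v w) = 0 := by
        rw [𝒱.vacuum, if_neg (show ¬(-2 + 0 - (i:ℤ) = -1) by omega)]
      rw [hv1, hv2]
      simp
  · -- n > 0 : only the term i = n-1 survives (second part)
    set a : ℕ := (n - 1).toNat with ha
    have haz : (a : ℤ) = n - 1 := by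
      rw [ha]; exact Int.toNat_of_nonneg (by omega)
    rw [finsum_eq_single _ a]
    · have hv1 : 𝒱.mode (n + a) 𝒱.one w = 0 := by
        rw [𝒱.vacuum]
        have : ¬ ((n:ℤ) + a = -1) := by omega
        simp [this]
      have hv2 : 𝒱.mode (-2 + n - a) 𝒱.one (𝒱.mode (0 + a) v w) = 𝒱.mode (0 + a) v w := by
        rw [𝒱.vacuum]
        have : -2 + n - (a:ℤ) = -1 := by omega
        simp [this]
      rw [hv1, hv2, hneg2]
      rw [choose_neg_two]
      have hidx : (0 : ℤ) + (a:ℤ) = n - 1 := by omega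
      rw [hidx]
      have hco : ((-1:ℂ)^a * ((((-1:ℤ))^a * ((a:ℤ) + 1) : ℤ) : ℂ)) = (n:ℂ) := by
        push_cast
        rw [← mul_assoc, ← mul_pow]
        simp only [neg_mul_neg, one_mul, one_pow]
        have : ((a:ℂ) + 1) = (n:ℂ) := by
          have : ((a:ℤ) + 1) = n := by omega
          calc ((a:ℂ) + 1) = (((a:ℤ) + 1 : ℤ) : ℂ) := by push_cast; ring
          _ = ((n : ℤ) : ℂ) := by rw [this]
        simpa using this
      rw [hco]
      simp only [mode_zero_right, smul_zero, zero_sub, smul_neg]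
      rw [smul_smul]
      push_cast
      module
    · intro i hi
      have hv1 : 𝒱.mode (n + i) 𝒱.one w = 0 := by
        rw [𝒱.vacuum]
        have : ¬ ((n:ℤ) + i = -1) := by omega
        simp [this]
      have hv2 : 𝒱.mode (-2 + n - i) 𝒱.one (𝒱.mode (0 + i) v w) = 0 := by
        rw [𝒱.vacuum]
        have : ¬ (-2 + n - (i:ℤ) = -1) := by omega
        simp [this]
      rw [hv1, hv2]
      simp

end Stmt19Aux

namespace Stmt19Aux

variable {V : Type*} [AddCommGroup V] [Module ℂ V] (𝒱 : NGradedVertexAlgebra V)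

/-- `z_{-1-k} 1 = (1/k!) • D^k z`. -/
theorem mode_neg_one_sub (k : ℕ) (z : V) :
    𝒱.mode (-1 - (k:ℤ)) z 𝒱.one = ((k.factorial : ℂ))⁻¹ • (DD 𝒱)^[k] z := by
  induction k generalizing z with
  | zero => simp [𝒱.create_neg_one]
  | succ k ih =>
    have h1 := mode_DD 𝒱 z 𝒱.one (-1 - (k:ℤ))
    -- h1 : mode (-1-k) (DD z) 1 = -(-1-k) • mode (-1-k-1) z 1
    have h2 : 𝒱.mode (-1 - (k:ℤ)) (DD 𝒱 z) 𝒱.one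
        = ((k.factorial : ℂ))⁻¹ • (DD 𝒱)^[k] (DD 𝒱 z) := ih (DD 𝒱 z)
    have h3 : (-1 - (k:ℤ)) - 1 = -1 - ((k+1 : ℕ) : ℤ) := by push_cast; ring
    rw [h3] at h1
    have h4 : -((-1 - (k:ℤ) : ℤ) : ℂ) = ((k:ℂ) + 1) := by push_cast; ring
    rw [h4] at h1
    have h5 : ((k:ℂ) + 1) ≠ 0 := by
      have : (0:ℝ) < (k:ℝ) + 1 := by positivity
      intro h
      have := congrArg Complex.re h
      simp at this
      linarith
    have h6 : 𝒱.mode (-1 - ((k+1:ℕ):ℤ)) z 𝒱.one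
        = ((k:ℂ) + 1)⁻¹ • 𝒱.mode (-1 - (k:ℤ)) (DD 𝒱 z) 𝒱.one := by
      rw [h1, smul_smul, inv_mul_cancel₀ h5, one_smul]
    rw [h6, h2, smul_smul]
    rw [Function.iterate_succ_apply]
    congr 1
    rw [Nat.factorial_succ]
    push_cast
    rw [mul_inv]

/-- Skew-symmetry, in the form
`∑ᶠ i, ((-1)^i/i!) • D^i (y_{l+i} x) = -(-1)^l • x_l y`. -/
theorem skew_formula (x y : V) (l : ℤ) :
    ∑ᶠ i : ℕ, (((-1:ℂ)^i) * ((i.factorial : ℂ))⁻¹) • (DD 𝒱)^[i] (𝒱.mode (l + i) y x)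
      = -((-1:ℂ)^l) • 𝒱.mode l x y := by
  have hb := 𝒱.borcherds y x 𝒱.one l (-1) 0
  have hL : (∑ᶠ i : ℕ, ((Ring.choose (-1:ℤ) i : ℤ) : ℂ) •
        𝒱.mode (-1 + 0 - i) (𝒱.mode (l + i) y x) 𝒱.one)
      = ∑ᶠ i : ℕ, (((-1:ℂ)^i) * ((i.factorial : ℂ))⁻¹) • (DD 𝒱)^[i] (𝒱.mode (l + i) y x) := by
    apply finsum_congr
    intro i
    rw [choose_neg_one]
    have hidx : (-1:ℤ) + 0 - (i:ℤ) = -1 - (i:ℤ) := by ring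
    rw [hidx, mode_neg_one_sub]
    rw [smul_smul]
    push_cast
    ring_nf
  have hR : (∑ᶠ i : ℕ, ((-1 : ℂ) ^ i * ((Ring.choose l i : ℤ) : ℂ)) •
          (𝒱.mode (l + (-1) - i) y (𝒱.mode (0 + i) x 𝒱.one)
            - ((-1 : ℂ) ^ l) • 𝒱.mode (l + 0 - i) x (𝒱.mode ((-1) + i) y 𝒱.one)))
      = -((-1:ℂ)^l) • 𝒱.mode l x y := by
    rw [finsum_eq_single _ 0]
    · have e1 : 𝒱.mode (0 + ((0:ℕ):ℤ)) x 𝒱.one = 0 := by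
        rw [𝒱.create_nonneg]; norm_num
      have e2 : 𝒱.mode ((-1:ℤ) + ((0:ℕ):ℤ)) y 𝒱.one = y := by
        have : ((-1:ℤ) + ((0:ℕ):ℤ)) = -1 := by norm_num
        rw [this, 𝒱.create_neg_one]
      rw [e1, e2]
      rw [Ring.choose_zero_right]
      have h5 : (l : ℤ) + 0 - ((0:ℕ):ℤ) = l := by norm_num
      rw [h5]
      simp
    · intro i hi
      have e1 : 𝒱.mode (0 + (i:ℤ)) x 𝒱.one = 0 := by
        rw [𝒱.create_nonneg]; omega
      have e2 : 𝒱.mode ((-1:ℤ) + (i:ℤ)) y 𝒱.one = 0 := by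
        rw [𝒱.create_nonneg]; omega
      rw [e1, e2]
      simp
  rw [hL, hR] at hb
  exact hb

end Stmt19Aux

namespace Stmt19Aux

variable {V : Type*} [AddCommGroup V] [Module ℂ V] (𝒱 : NGradedVertexAlgebra V)

/-- The radical of the pairing on `V₁`. -/
def RadSet : Set V :=
  {u | u ∈ 𝒱.grade 1 ∧ ∀ b ∈ 𝒱.grade 1, 𝒱.mode 1 u b = 0}

/-- For `u ∈ rad` and `a ∈ V₀`, `u₀a = 0`. -/
theorem rad_mode_zero_grade_zero {u a : V} (hu : u ∈ RadSet 𝒱) (ha : a ∈ 𝒱.grade 0) :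
    𝒱.mode 0 u a = 0 := by
  obtain ⟨hu1, hu2⟩ := hu
  have h1 : 𝒱.mode 1 u a = 0 :=
    mode_eq_zero_of_deg 𝒱 hu1 ha (by norm_num)
  have hDa : DD 𝒱 a ∈ 𝒱.grade 1 := by
    have := DD_mem 𝒱 ha
    norm_num at this
    exact this
  have h2 : 𝒱.mode 1 u (DD 𝒱 a) = 0 := hu2 _ hDa
  have h3 := DD_mode 𝒱 u a 1
  rw [h1, DD_zero, h2] at h3
  have h5 : (1:ℤ) - 1 = 0 := by norm_num
  rw [h5] at h3
  rw [zero_sub] at h3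
  have h6 := neg_eq_zero.mp h3.symm
  have h7 : ((1:ℤ):ℂ) • 𝒱.mode 0 u a = 𝒱.mode 0 u a := by norm_num
  rw [h7] at h6
  exact h6

/-- For `u ∈ rad` and `c ∈ V₁`, `u₀c = u₁(Dc)`. -/
theorem rad_mode_zero_eq (u c : V) (hu1c : 𝒱.mode 1 u c = 0) :
    𝒱.mode 0 u c = 𝒱.mode 1 u (DD 𝒱 c) := by
  have h3 := DD_mode 𝒱 u c 1
  rw [hu1c, DD_zero] at h3
  have h5 : (1:ℤ) - 1 = 0 := by norm_num
  rw [h5] at h3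
  have h6 := (sub_eq_zero.mp h3.symm).symm
  have h7 : ((1:ℤ):ℂ) • 𝒱.mode 0 u c = 𝒱.mode 0 u c := by norm_num
  rw [h7] at h6
  exact h6

/-- For `u ∈ rad` and `c ∈ V₁`, `u₀c ∈ rad`. -/
theorem rad_mode_zero_grade_one {u c : V} (hu : u ∈ RadSet 𝒱) (hc : c ∈ 𝒱.grade 1) :
    𝒱.mode 0 u c ∈ RadSet 𝒱 := by
  obtain ⟨hu1, hu2⟩ := hu
  constructor
  · have := 𝒱.grading 1 1 0 u c hu1 hc
    norm_num at this
    exact this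
  · intro b hb
    have hc1b : 𝒱.mode 1 c b ∈ 𝒱.grade 0 := by
      have := 𝒱.grading 1 1 1 c b hc hb
      norm_num at this
      exact this
    have hc0b : 𝒱.mode 0 c b ∈ 𝒱.grade 1 := by
      have := 𝒱.grading 1 1 0 c b hc hb
      norm_num at this
      exact this
    -- (A): (u₀c)₁ b = -c₁(u₀b)
    have hA : 𝒱.mode 1 (𝒱.mode 0 u c) b = - 𝒱.mode 1 c (𝒱.mode 0 u b) := by
      have h := comm_formula 𝒱 u c b 0 1
      have hS : (∑ᶠ i : ℕ, ((Ring.choose (0:ℤ) i : ℤ) : ℂ) •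
          𝒱.mode (0 + 1 - i) (𝒱.mode i u c) b) = 𝒱.mode 1 (𝒱.mode 0 u c) b := by
        rw [finsum_eq_single _ 0]
        · norm_num
        · intro i hi
          rw [choose_zero_of_ne i hi]
          norm_num
      rw [hS] at h
      have h0 : 𝒱.mode 0 u (𝒱.mode 1 c b) = 0 :=
        rad_mode_zero_grade_zero 𝒱 ⟨hu1, hu2⟩ hc1b
      rw [h0] at h
      -- h : 0 = mode 1 c (mode 0 u b) + mode 1 (mode 0 u c) b
      linear_combination (norm := module) -h
    -- (B): (u₀c)₁ b = -2 • c₁(u₀b), via u₀c = u₁(Dc)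
    have hu1c : 𝒱.mode 1 u c = 0 := hu2 _ hc
    have hB0 := rad_mode_zero_eq 𝒱 u c hu1c
    have hB : 𝒱.mode 1 (𝒱.mode 0 u c) b
        = (-2 : ℂ) • 𝒱.mode 1 c (𝒱.mode 0 u b) := by
      rw [hB0]
      rw [iterate_formula 𝒱 u (DD 𝒱 c) b 1 1]
      rw [finsum_pair]
      · -- normalize all numeral indices and coefficients
        norm_num [Ring.choose_zero_right, Ring.choose_one_right]
        simp only [mode_DD]
        norm_num
        rw [hu2 _ hc0b, hu2 _ hb, rad_mode_zero_grade_zero 𝒱 ⟨hu1, hu2⟩ hc1b]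
        simp [mode_zero_right]
      · intro i hi
        rw [choose_one_of_ge_two i hi]
        norm_num
    rw [hB] at hA
    have hX : 𝒱.mode 1 c (𝒱.mode 0 u b) = 0 := by
      have h2 : (-1 : ℂ) • 𝒱.mode 1 c (𝒱.mode 0 u b) = 0 := by
        linear_combination (norm := module) hA
      have := congrArg (fun x => (-1:ℂ) • x) h2
      simpa using this
    rw [hB, hX, smul_zero]

end Stmt19Aux

namespace Stmt19Aux

variable {V : Type*} [AddCommGroup V] [Module ℂ V]

/-- case analysis: for `u ∈ rad`, a "letter" `c ∈ V_d` (`d ∈ {0,1}`) and `i : ℕ`,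
`uᵢc` is `0` or lies in `rad`. -/
theorem rad_mode_letter (𝒱 : NGradedVertexAlgebra V) {u c : V} {d : ℤ}
    (hu : u ∈ RadSet 𝒱) (hd : d = 0 ∨ d = 1) (hc : c ∈ 𝒱.grade d) (i : ℕ) :
    𝒱.mode i u c = 0 ∨ 𝒱.mode i u c ∈ RadSet 𝒱 := by
  rcases hd with rfl | rfl
  · -- d = 0
    rcases Nat.eq_zero_or_pos i with rfl | hi
    · left
      have : ((0:ℕ):ℤ) = 0 := by norm_num
      rw [this]
      exact rad_mode_zero_grade_zero 𝒱 hu hc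
    · left
      exact mode_eq_zero_of_deg 𝒱 hu.1 hc (by omega)
  · -- d = 1
    match i, hu with
    | 0, hu =>
      right
      have : ((0:ℕ):ℤ) = 0 := by norm_num
      rw [this]
      exact rad_mode_zero_grade_one 𝒱 hu hc
    | 1, hu =>
      left
      have : ((1:ℕ):ℤ) = 1 := by norm_num
      rw [this]
      exact hu.2 _ hc
    | (n+2), hu =>
      left
      exact mode_eq_zero_of_deg 𝒱 hu.1 hc (by push_cast; omega)

/-- The "creation strings": elements of the form
`c¹_{j₁} (c²_{j₂} (⋯ 1))` where each `cᵗ ∈ V_{dₜ}` with `dₜ ∈ {0,1}` and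
`jₜ ≤ dₜ - 1`.  These are homogeneous (degree tracked by the first index). -/
inductive Gen (𝒱 : NGradedVertexAlgebra V) : ℤ → V → Prop
  | one : Gen 𝒱 0 𝒱.one
  | step (d j p : ℤ) (c w : V) (hd : d = 0 ∨ d = 1) (hc : c ∈ 𝒱.grade d)
      (hj : j ≤ d - 1) (hw : Gen 𝒱 p w) : Gen 𝒱 (d + p - j - 1) (𝒱.mode j c w)

theorem Gen.mem_grade {𝒱 : NGradedVertexAlgebra V} {p : ℤ} {w : V}
    (h : Gen 𝒱 p w) : w ∈ 𝒱.grade p := by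
  induction h with
  | one => exact 𝒱.one_mem
  | step d j p c w hd hc hj hw ih => exact 𝒱.grading d p j c w hc ih

theorem Gen.deg_nonneg {𝒱 : NGradedVertexAlgebra V} {p : ℤ} {w : V}
    (h : Gen 𝒱 p w) (hw : w ≠ 0) : 0 ≤ p := by
  by_contra hp
  exact hw (mem_grade_neg 𝒱 (by omega) h.mem_grade)

/-- THE key vanishing: for `u ∈ rad` and a creation string `w` of degree `p`,
`uₘ w = 0` for every `m ≥ p`. -/
theorem rad_mode_gen (𝒱 : NGradedVertexAlgebra V) {p : ℤ} {w : V} (hgw : Gen 𝒱 p w) :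
    ∀ u ∈ RadSet 𝒱, ∀ m : ℤ, p ≤ m → 𝒱.mode m u w = 0 := by
  induction hgw with
  | one =>
    intro u hu m hm
    exact 𝒱.create_nonneg u m (by omega)
  | step d j p c w hd hc hj hw ih =>
    intro u hu m hm
    rw [comm_formula 𝒱 u c w m j]
    have h1 : 𝒱.mode m u w = 0 := ih u hu m (by omega)
    rw [h1, mode_zero_right]
    rw [finsum_eq_zero_of_forall_eq_zero]
    · simp
    · intro i
      rcases rad_mode_letter 𝒱 hu hd hc i with h | h
      · rw [h, mode_zero_left, smul_zero]
      · -- uᵢc ∈ rad: this can only happen when d = 1, i = 0; but in any case uᵢc ∈ grade (d - i),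
        -- and since it is in rad ⊆ grade 1 we get d - i = 1... we argue directly:
        -- uᵢc ∈ rad and the index m + j - i ≥ p whenever the result could be nonzero.
        rcases Nat.eq_zero_or_pos i with rfl | hi
        · -- i = 0: index m + j ≥ p requires m ≥ p - j; from hm : d+p-j-1 ≤ m and
          -- But for d = 0, u₀c = 0 (rad_mode_letter gave rad only in d=1 case for i=0
          -- when c ∈ grade 0 it returns left). We use the grade of uᵢc ∈ rad ⊆ grade 1:
          -- and rad ⊆ grade 1, so if u₀c ≠ 0 then d = 1.
          by_cases hz : 𝒱.mode ((0:ℕ):ℤ) u c = 0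
          · rw [hz, mode_zero_left, smul_zero]
          · have hd1 : d = 1 := by
              rcases hd with rfl | rfl
              · exfalso
                apply hz
                have : ((0:ℕ):ℤ) = 0 := by norm_num
                rw [this]
                exact rad_mode_zero_grade_zero 𝒱 hu hc
              · rfl
            subst hd1
            rw [ih _ h (m + j - ((0:ℕ):ℤ)) (by push_cast; omega), smul_zero]
        · -- i ≥ 1 and uᵢc ∈ rad: then uᵢc ∈ grade (1 + d - i - 1) = grade (d - i) with
          -- d - i ≤ 0, but also uᵢc ∈ grade 1; by independence it must be 0 unless 1 = d - i,
          -- impossible.  Easier: for i ≥ 1, rad_mode_letter's proof gave 0 except (d=1,i=0).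
          -- We redo: for d = 0 it always gave 0 (handled above), for d = 1, i = 1 gives 0,
          -- i ≥ 2 gives 0.  So here i ≥ 1 means uᵢc = 0.
          have h0 : 𝒱.mode (i:ℤ) u c = 0 := by
            rcases hd with rfl | rfl
            · exact mode_eq_zero_of_deg 𝒱 hu.1 hc (by omega)
            · rcases Nat.lt_or_ge i 2 with h2 | h2
              · have : i = 1 := by omega
                subst this
                have : ((1:ℕ):ℤ) = 1 := by norm_num
                rw [this]
                exact hu.2 _ hc
              · exact mode_eq_zero_of_deg 𝒱 hu.1 hc (by omega)
          rw [h0, mode_zero_left, smul_zero]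

end Stmt19Aux

namespace Stmt19Aux

variable {V : Type*} [AddCommGroup V] [Module ℂ V]

/-- The span of the creation strings. -/
def genSpan (𝒱 : NGradedVertexAlgebra V) : Submodule ℂ V :=
  Submodule.span ℂ {w | ∃ p, Gen 𝒱 p w}

theorem genSpan_step (𝒱 : NGradedVertexAlgebra V) {d : ℤ} (hd : d = 0 ∨ d = 1)
    {c : V} (hc : c ∈ 𝒱.grade d) {j : ℤ} (hj : j ≤ d - 1) :
    ∀ x ∈ genSpan 𝒱, 𝒱.mode j c x ∈ genSpan 𝒱 := by
  intro x hx
  induction hx using Submodule.span_induction with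
  | mem w hw =>
    obtain ⟨p, hp⟩ := hw
    exact Submodule.subset_span ⟨_, Gen.step d j p c w hd hc hj hp⟩
  | zero => rw [mode_zero_right]; exact (genSpan 𝒱).zero_mem
  | add y z _ _ hy hz => rw [map_add]; exact (genSpan 𝒱).add_mem hy hz
  | smul a y _ hy => rw [map_smul]; exact (genSpan 𝒱).smul_mem a hy

/-- Letter modes (with arbitrary index) preserve `genSpan`, on `Gen` elements. -/
theorem genSpan_mode_gen (𝒱 : NGradedVertexAlgebra V) {p : ℤ} {w : V} (hgw : Gen 𝒱 p w) :
    ∀ (d : ℤ), (d = 0 ∨ d = 1) → ∀ c ∈ 𝒱.grade d, ∀ j : ℤ,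
      𝒱.mode j c w ∈ genSpan 𝒱 := by
  induction hgw with
  | one =>
    intro d hd c hc j
    rcases le_or_gt j (d - 1) with hj | hj
    · exact Submodule.subset_span ⟨_, Gen.step d j 0 c 𝒱.one hd hc hj Gen.one⟩
    · have : 𝒱.mode j c 𝒱.one = 0 := 𝒱.create_nonneg c j (by omega)
      rw [this]; exact (genSpan 𝒱).zero_mem
  | step d' j' p' c' w' hd' hc' hj' hw' ih =>
    intro d hd c hc j
    rcases le_or_gt j (d - 1) with hj | hj
    · exact Submodule.subset_span
        ⟨_, Gen.step d j _ c _ hd hc hj (Gen.step d' j' p' c' w' hd' hc' hj' hw')⟩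
    · -- j ≥ d : commute inward
      rw [comm_formula 𝒱 c c' w' j j']
      apply (genSpan 𝒱).add_mem
      · exact genSpan_step 𝒱 hd' hc' hj' _ (ih d hd c hc j)
      · apply finsum_mem_submodule
        intro i
        apply (genSpan 𝒱).smul_mem
        -- (cᵢc') has degree d + d' - i - 1 ∈ {0,1} or is 0
        set e := 𝒱.mode i c c' with he
        have hmem : e ∈ 𝒱.grade (d + d' - i - 1) := 𝒱.grading d d' i c c' hc hc'
        rcases lt_or_ge (d + d' - (i:ℤ) - 1) 0 with hneg | hpos
        · have : e = 0 := mem_grade_neg 𝒱 hneg hmem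
          rw [this, mode_zero_left]
          exact (genSpan 𝒱).zero_mem
        · have hdd : (d + d' - (i:ℤ) - 1) = 0 ∨ (d + d' - (i:ℤ) - 1) = 1 := by
            rcases hd with rfl | rfl <;> rcases hd' with rfl | rfl <;> omega
          exact ih _ hdd e hmem _
  
/-- The spanning theorem: assuming `hgen`, creation strings span `V`. -/
theorem genSpan_eq_top (𝒱 : NGradedVertexAlgebra V)
    (hgen : ∀ W : Submodule ℂ V, 𝒱.one ∈ W →
      (∀ (n : ℤ) (u w : V), (u ∈ 𝒱.grade 0 ∨ u ∈ 𝒱.grade 1) → w ∈ W →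
        𝒱.mode n u w ∈ W) → W = ⊤) :
    genSpan 𝒱 = ⊤ := by
  apply hgen
  · exact Submodule.subset_span ⟨0, Gen.one⟩
  · intro n u w hu hw
    induction hw using Submodule.span_induction with
    | mem w hw =>
      obtain ⟨p, hp⟩ := hw
      rcases hu with hu | hu
      · exact genSpan_mode_gen 𝒱 hp 0 (Or.inl rfl) u hu n
      · exact genSpan_mode_gen 𝒱 hp 1 (Or.inr rfl) u hu n
    | zero => rw [mode_zero_right]; exact (genSpan 𝒱).zero_mem
    | add y z _ _ hy hz => rw [map_add]; exact (genSpan 𝒱).add_mem hy hz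
    | smul a y _ hy => rw [map_smul]; exact (genSpan 𝒱).smul_mem a hy

end Stmt19Aux

namespace Stmt19Aux

variable {V : Type*} [AddCommGroup V] [Module ℂ V]

/-- The candidate ideal: the span of all `uₙv` with `u ∈ rad`. -/
def radIdeal (𝒱 : NGradedVertexAlgebra V) : Submodule ℂ V :=
  Submodule.span ℂ {x | ∃ u n v, u ∈ RadSet 𝒱 ∧ x = 𝒱.mode n u v}

theorem radIdeal_gen (𝒱 : NGradedVertexAlgebra V) {u : V} (hu : u ∈ RadSet 𝒱)
    (n : ℤ) (v : V) : 𝒱.mode n u v ∈ radIdeal 𝒱 :=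
  Submodule.subset_span ⟨u, n, v, hu, rfl⟩

theorem rad_subset_radIdeal (𝒱 : NGradedVertexAlgebra V) {u : V} (hu : u ∈ RadSet 𝒱) :
    u ∈ radIdeal 𝒱 := by
  have := radIdeal_gen 𝒱 hu (-1) 𝒱.one
  rwa [𝒱.create_neg_one] at this

/-- Letter modes preserve `radIdeal`. -/
theorem radIdeal_letter (𝒱 : NGradedVertexAlgebra V) {d : ℤ} (hd : d = 0 ∨ d = 1)
    {c : V} (hc : c ∈ 𝒱.grade d) (m : ℤ) :
    ∀ x ∈ radIdeal 𝒱, 𝒱.mode m c x ∈ radIdeal 𝒱 := by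
  intro x hx
  induction hx using Submodule.span_induction with
  | mem w hw =>
    obtain ⟨u, q, v, hu, rfl⟩ := hw
    -- c_m (u_q v) = u_q (c_m v) - ∑ᶠ i, C(q,i) • (uᵢc)_{q+m-i} v
    have h := comm_formula 𝒱 u c v q m
    have : 𝒱.mode m c (𝒱.mode q u v)
        = 𝒱.mode q u (𝒱.mode m c v)
          - ∑ᶠ i : ℕ, ((Ring.choose q i : ℤ) : ℂ) • 𝒱.mode (q + m - i) (𝒱.mode i u c) v := by
      rw [h]; abel
    rw [this]
    apply Submodule.sub_mem
    · exact radIdeal_gen 𝒱 hu _ _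
    · apply finsum_mem_submodule
      intro i
      apply Submodule.smul_mem
      rcases rad_mode_letter 𝒱 hu hd hc i with h0 | hrad
      · rw [h0, mode_zero_left]; exact (radIdeal 𝒱).zero_mem
      · exact radIdeal_gen 𝒱 hrad _ _
  | zero => rw [mode_zero_right]; exact (radIdeal 𝒱).zero_mem
  | add y z _ _ hy hz => rw [map_add]; exact Submodule.add_mem _ hy hz
  | smul a y _ hy => rw [map_smul]; exact Submodule.smul_mem _ a hy

/-- All left modes preserve `radIdeal` (uses `hgen`). -/
theorem radIdeal_left (𝒱 : NGradedVertexAlgebra V)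
    (hgen : ∀ W : Submodule ℂ V, 𝒱.one ∈ W →
      (∀ (n : ℤ) (u w : V), (u ∈ 𝒱.grade 0 ∨ u ∈ 𝒱.grade 1) → w ∈ W →
        𝒱.mode n u w ∈ W) → W = ⊤) :
    ∀ (z : V) (m : ℤ), ∀ x ∈ radIdeal 𝒱, 𝒱.mode m z x ∈ radIdeal 𝒱 := by
  -- the set of `z` all of whose modes preserve `radIdeal` is a submodule
  set Wl : Submodule ℂ V :=
    { carrier := {z | ∀ (m : ℤ), ∀ x ∈ radIdeal 𝒱, 𝒱.mode m z x ∈ radIdeal 𝒱}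
      add_mem' := by
        intro a b ha hb m x hx
        have : 𝒱.mode m (a + b) x = 𝒱.mode m a x + 𝒱.mode m b x := by
          rw [map_add]; rfl
        rw [this]
        exact Submodule.add_mem _ (ha m x hx) (hb m x hx)
      zero_mem' := by
        intro m x hx
        rw [mode_zero_left]
        exact (radIdeal 𝒱).zero_mem
      smul_mem' := by
        intro a z hz m x hx
        have : 𝒱.mode m (a • z) x = a • 𝒱.mode m z x := by
          rw [map_smul]; rfl
        rw [this]
        exact Submodule.smul_mem _ a (hz m x hx) } with hWl
  have hWtop : Wl = ⊤ := by
    apply hgen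
    · intro m x hx
      rw [𝒱.vacuum]
      split
      · exact hx
      · exact (radIdeal 𝒱).zero_mem
    · intro l c z hc hz
      intro m x hx
      rw [iterate_formula 𝒱 c z x l m]
      apply finsum_mem_submodule
      intro i
      apply Submodule.smul_mem
      apply Submodule.sub_mem
      · -- c_{l-i} (z_{m+i} x)
        rcases hc with hc | hc
        · exact radIdeal_letter 𝒱 (Or.inl rfl) hc _ _ (hz _ _ hx)
        · exact radIdeal_letter 𝒱 (Or.inr rfl) hc _ _ (hz _ _ hx)
      · apply Submodule.smul_mem
        -- z_{l+m-i} (cᵢ x)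
        apply hz
        rcases hc with hc | hc
        · exact radIdeal_letter 𝒱 (Or.inl rfl) hc _ _ hx
        · exact radIdeal_letter 𝒱 (Or.inr rfl) hc _ _ hx
  intro z m x hx
  have hzW : z ∈ Wl := by rw [hWtop]; trivial
  exact hzW m x hx

/-- `D` preserves `radIdeal`. -/
theorem radIdeal_DD (𝒱 : NGradedVertexAlgebra V) :
    ∀ x ∈ radIdeal 𝒱, DD 𝒱 x ∈ radIdeal 𝒱 := by
  intro x hx
  induction hx using Submodule.span_induction with
  | mem w hw =>
    obtain ⟨u, q, v, hu, rfl⟩ := hw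
    rw [DD_mode]
    apply Submodule.sub_mem
    · exact radIdeal_gen 𝒱 hu _ _
    · exact Submodule.smul_mem _ _ (radIdeal_gen 𝒱 hu _ _)
  | zero => rw [DD_zero]; exact (radIdeal 𝒱).zero_mem
  | add y z _ _ hy hz =>
    have : DD 𝒱 (y + z) = DD 𝒱 y + DD 𝒱 z := by
      unfold DD; rw [map_add]; rfl
    rw [this]; exact Submodule.add_mem _ hy hz
  | smul a y _ hy =>
    have : DD 𝒱 (a • y) = a • DD 𝒱 y := by
      unfold DD; rw [map_smul]; rfl
    rw [this]; exact Submodule.smul_mem _ a hy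

theorem radIdeal_DD_iter (𝒱 : NGradedVertexAlgebra V) (k : ℕ) :
    ∀ x ∈ radIdeal 𝒱, (DD 𝒱)^[k] x ∈ radIdeal 𝒱 := by
  induction k with
  | zero => intro x hx; simpa using hx
  | succ k ih =>
    intro x hx
    rw [Function.iterate_succ_apply]
    exact ih _ (radIdeal_DD 𝒱 x hx)

/-- Right modes preserve `radIdeal` (via skew symmetry). -/
theorem radIdeal_right (𝒱 : NGradedVertexAlgebra V)
    (hgen : ∀ W : Submodule ℂ V, 𝒱.one ∈ W →
      (∀ (n : ℤ) (u w : V), (u ∈ 𝒱.grade 0 ∨ u ∈ 𝒱.grade 1) → w ∈ W →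
        𝒱.mode n u w ∈ W) → W = ⊤) :
    ∀ x ∈ radIdeal 𝒱, ∀ (l : ℤ) (y : V), 𝒱.mode l x y ∈ radIdeal 𝒱 := by
  intro x hx l y
  have hs := skew_formula 𝒱 x y l
  have hmem : (∑ᶠ i : ℕ, (((-1:ℂ)^i) * ((i.factorial : ℂ))⁻¹) •
      (DD 𝒱)^[i] (𝒱.mode (l + i) y x)) ∈ radIdeal 𝒱 := by
    apply finsum_mem_submodule
    intro i
    apply Submodule.smul_mem
    exact radIdeal_DD_iter 𝒱 i _ (radIdeal_left 𝒱 hgen y _ x hx)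
  rw [hs] at hmem
  have hne : (-((-1:ℂ)^l)) ≠ 0 := by
    apply neg_ne_zero.mpr
    apply zpow_ne_zero
    norm_num
  have := Submodule.smul_mem (radIdeal 𝒱) (-((-1:ℂ)^l))⁻¹ hmem
  rwa [smul_smul, inv_mul_cancel₀ hne, one_smul] at this

/-- `radIdeal` is an ideal. -/
theorem radIdeal_isIdeal (𝒱 : NGradedVertexAlgebra V)
    (hgen : ∀ W : Submodule ℂ V, 𝒱.one ∈ W →
      (∀ (n : ℤ) (u w : V), (u ∈ 𝒱.grade 0 ∨ u ∈ 𝒱.grade 1) → w ∈ W →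
        𝒱.mode n u w ∈ W) → W = ⊤) :
    𝒱.IsIdeal (radIdeal 𝒱) := by
  intro n v w hw
  exact ⟨radIdeal_left 𝒱 hgen v n w hw, radIdeal_right 𝒱 hgen w hw n v⟩

end Stmt19Aux

namespace Stmt19Aux

variable {V : Type*} [AddCommGroup V] [Module ℂ V]

/-- `radIdeal` is contained in the sum of the nonzero graded pieces. -/
theorem radIdeal_le_pos (𝒱 : NGradedVertexAlgebra V)
    (hgen : ∀ W : Submodule ℂ V, 𝒱.one ∈ W →
      (∀ (n : ℤ) (u w : V), (u ∈ 𝒱.grade 0 ∨ u ∈ 𝒱.grade 1) → w ∈ W →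
        𝒱.mode n u w ∈ W) → W = ⊤) :
    radIdeal 𝒱 ≤ ⨆ q : ℤ, ⨆ _ : q ≠ 0, 𝒱.grade q := by
  set P : Submodule ℂ V := ⨆ q : ℤ, ⨆ _ : q ≠ 0, 𝒱.grade q with hP
  apply Submodule.span_le.mpr
  rintro x ⟨u, n, v, hu, rfl⟩
  have hv : v ∈ genSpan 𝒱 := by rw [genSpan_eq_top 𝒱 hgen]; trivial
  -- the image of `genSpan` under `mode n u` is inside `P`
  have key : ∀ y ∈ genSpan 𝒱, 𝒱.mode n u y ∈ P := by
    intro y hy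
    induction hy using Submodule.span_induction with
    | mem w hw =>
      obtain ⟨p, hp⟩ := hw
      rcases le_or_gt p n with hpn | hpn
      · rw [rad_mode_gen 𝒱 hp u hu n hpn]
        exact P.zero_mem
      · have hmem : 𝒱.mode n u w ∈ 𝒱.grade (1 + p - n - 1) :=
          𝒱.grading 1 p n u w hu.1 hp.mem_grade
        have hle : 𝒱.grade (1 + p - n - 1) ≤ P := by
          apply le_iSup_of_le (1 + p - n - 1)
          exact le_iSup_of_le (by omega) le_rfl
        exact hle hmem
    | zero => rw [mode_zero_right]; exact P.zero_mem
    | add y z _ _ hy hz => rw [map_add]; exact P.add_mem hy hz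
    | smul a y _ hy => rw [map_smul]; exact P.smul_mem a hy
  exact key v hv

/-- `radIdeal ⊓ V₀ = ⊥`. -/
theorem radIdeal_inf_grade_zero (𝒱 : NGradedVertexAlgebra V)
    (hgen : ∀ W : Submodule ℂ V, 𝒱.one ∈ W →
      (∀ (n : ℤ) (u w : V), (u ∈ 𝒱.grade 0 ∨ u ∈ 𝒱.grade 1) → w ∈ W →
        𝒱.mode n u w ∈ W) → W = ⊤) :
    radIdeal 𝒱 ⊓ 𝒱.grade 0 = ⊥ := by
  have hind : iSupIndep 𝒱.grade := 𝒱.internal.submodule_iSupIndep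
  have hdisj : Disjoint (𝒱.grade 0) (⨆ q : ℤ, ⨆ _ : q ≠ 0, 𝒱.grade q) := hind 0
  apply le_bot_iff.mp
  calc radIdeal 𝒱 ⊓ 𝒱.grade 0
      ≤ (⨆ q : ℤ, ⨆ _ : q ≠ 0, 𝒱.grade q) ⊓ 𝒱.grade 0 :=
        inf_le_inf_right _ (radIdeal_le_pos 𝒱 hgen)
    _ = ⊥ := by rw [inf_comm]; exact disjoint_iff.mp hdisj

end Stmt19Aux


/-- Let `V = ⊕ₙ V₍ₙ₎` be an ℕ-graded vertex algebra generated by `V₍₀₎` and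
`V₍₁₎`, with `V₍₀₎`, `V₍₁₎` finite-dimensional and `dim V₍₀₎ ≥ 2`.  Let
`rad⟨.,.⟩ = {u ∈ V₍₁₎ : u₁b = 0 for all b ∈ V₍₁₎}`.  Then the ideal of `V`
generated by `rad⟨.,.⟩` meets `V₍₀₎` in `{0}`; consequently, if that ideal is
nonzero then `V` is not a simple vertex algebra. -/
theorem stmt_19 {V : Type*} [AddCommGroup V] [Module ℂ V]
    (𝒱 : NGradedVertexAlgebra V)
    [FiniteDimensional ℂ (𝒱.grade 0)] [FiniteDimensional ℂ (𝒱.grade 1)]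
    (hdim : 2 ≤ Module.finrank ℂ (𝒱.grade 0))
    (hgen : ∀ W : Submodule ℂ V, 𝒱.one ∈ W →
      (∀ (n : ℤ) (u w : V), (u ∈ 𝒱.grade 0 ∨ u ∈ 𝒱.grade 1) → w ∈ W →
        𝒱.mode n u w ∈ W) → W = ⊤) :
    (sInf {I : Submodule ℂ V | 𝒱.IsIdeal I ∧
        ∀ u ∈ 𝒱.grade 1, (∀ b ∈ 𝒱.grade 1, 𝒱.mode 1 u b = 0) → u ∈ I}
      ⊓ 𝒱.grade 0 = ⊥) ∧
    ((sInf {I : Submodule ℂ V | 𝒱.IsIdeal I ∧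
        ∀ u ∈ 𝒱.grade 1, (∀ b ∈ 𝒱.grade 1, 𝒱.mode 1 u b = 0) → u ∈ I} ≠ ⊥) →
      ∃ I : Submodule ℂ V, 𝒱.IsIdeal I ∧ I ≠ ⊥ ∧ I ≠ ⊤) := by
  classical
  set S : Set (Submodule ℂ V) := {I : Submodule ℂ V | 𝒱.IsIdeal I ∧
      ∀ u ∈ 𝒱.grade 1, (∀ b ∈ 𝒱.grade 1, 𝒱.mode 1 u b = 0) → u ∈ I} with hS
  have hMS : Stmt19Aux.radIdeal 𝒱 ∈ S := by
    refine ⟨Stmt19Aux.radIdeal_isIdeal 𝒱 hgen, ?_⟩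
    intro u hu1 hu2
    exact Stmt19Aux.rad_subset_radIdeal 𝒱 ⟨hu1, hu2⟩
  have hpart1 : sInf S ⊓ 𝒱.grade 0 = ⊥ := by
    apply le_bot_iff.mp
    calc sInf S ⊓ 𝒱.grade 0
        ≤ Stmt19Aux.radIdeal 𝒱 ⊓ 𝒱.grade 0 := inf_le_inf_right _ (sInf_le hMS)
      _ = ⊥ := Stmt19Aux.radIdeal_inf_grade_zero 𝒱 hgen
  refine ⟨hpart1, ?_⟩
  intro hne
  refine ⟨sInf S, ?_, hne, ?_⟩
  · -- sInf of ideals is an ideal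
    intro n v w hw
    constructor
    · apply Submodule.mem_sInf.mpr
      intro I hI
      exact (hI.1 n v w (Submodule.mem_sInf.mp hw I hI)).1
    · apply Submodule.mem_sInf.mpr
      intro I hI
      exact (hI.1 n v w (Submodule.mem_sInf.mp hw I hI)).2
  · -- sInf S ≠ ⊤, else V₀ = ⊥ contradicting dim V₀ ≥ 2
    intro htop
    rw [htop, top_inf_eq] at hpart1
    rw [hpart1] at hdim
    rw [finrank_bot ℂ V] at hdim
    omega
end
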